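/- arXiv:0911.0209 — 4 statements merged into one kernel-verified Lean document; each statement's English description precedes it below -/
import Mathlib

section
/- Let a group G act by isometries on a Λ-tree (Γ, d) and let x ∈ Γ. Suppose the action is regular with respect to x, i.e., for any g, h ∈ G there exists f ∈ G with [x, f·x] = [x, g·x] ∩ [x, h·x]. Then the based length function l_x(g) = d(x, g·x) is regular: for all g, h ∈ G there exist u, g₁, h₁ ∈ G with g = u·g₁, h = u·h₁, l_x(g) = l_x(u) + l_x(g₁), l_x(h) = l_x(u) + l_x(h₁), and l_x(u) = c(g,h), where c(g,h) = (1/2)(l_x(g) + l_x(h) - l_x(g⁻¹h)). -/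
/-- A segment in a Λ-metric space: the image of an isometry from a closed
interval `[a,b]` of `Λ`, with endpoints `y` and `z`. -/
def IsSegment {Λ : Type*} [AddCommGroup Λ] [LinearOrder Λ] [IsOrderedAddMonoid Λ] {X : Type*}
    (d : X → X → Λ) (s : Set X) (y z : X) : Prop :=
  ∃ a b : Λ, a ≤ b ∧ ∃ f : Λ → X,
    (∀ c ∈ Set.Icc a b, ∀ c' ∈ Set.Icc a b, d (f c) (f c') = |c' - c|) ∧
    f a = y ∧ f b = z ∧ s = f '' Set.Icc a b

/-- `d` makes `X` a Λ-tree: a geodesic Λ-metric space in which the union of two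
segments meeting in a single common endpoint is a segment (T2), and the
intersection of two segments with a common endpoint is a segment (T3). -/
def IsLambdaTree {Λ : Type*} [AddCommGroup Λ] [LinearOrder Λ] [IsOrderedAddMonoid Λ] {X : Type*}
    (d : X → X → Λ) : Prop :=
  (∀ x y : X, 0 ≤ d x y) ∧ (∀ x y : X, d x y = 0 ↔ x = y) ∧
  (∀ x y : X, d x y = d y x) ∧ (∀ x y z : X, d x y ≤ d x z + d y z) ∧
  (∀ x y : X, ∃ s, IsSegment d s x y) ∧
  (∀ (s₁ s₂ : Set X) (x y z : X), IsSegment d s₁ x y → IsSegment d s₂ y z →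
    s₁ ∩ s₂ = {y} → IsSegment d (s₁ ∪ s₂) x z) ∧
  (∀ (s₁ s₂ : Set X) (x y z : X), IsSegment d s₁ x y → IsSegment d s₂ x z →
    ∃ w, IsSegment d (s₁ ∩ s₂) x w)

/-- The segment `[x,y]` in a Λ-tree, described as the set of points between
`x` and `y`. -/
def seg {Λ : Type*} [AddCommGroup Λ] [LinearOrder Λ] [IsOrderedAddMonoid Λ] {X : Type*}
    (d : X → X → Λ) (x y : X) : Set X :=
  {w : X | d x w + d w y = d x y}

section aux
variable {Λ : Type*} [AddCommGroup Λ] [LinearOrder Λ] [IsOrderedAddMonoid Λ] {X : Type*} {d : X → X → Λ}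

lemma mem_icc_rev {a b c : Λ} (hc : c ∈ Set.Icc a b) : a + b - c ∈ Set.Icc a b := by
  constructor
  · rw [le_sub_iff_add_le]
    exact add_le_add_right hc.2 a
  · rw [sub_le_iff_le_add, add_comm a b]
    exact add_le_add_right hc.1 b

lemma IsSegment.rev {s : Set X} {y z : X} (h : IsSegment d s y z) :
    IsSegment d s z y := by
  obtain ⟨a, b, hab, f, hf, ha, hb, him⟩ := h
  refine ⟨a, b, hab, fun c => f (a + b - c), ?_, by simpa using hb, by simpa using ha, ?_⟩
  · intro c hc c' hc'
    rw [hf _ (mem_icc_rev hc) _ (mem_icc_rev hc'), abs_sub_comm]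
    congr 1; abel
  · rw [him]; ext w
    constructor
    · rintro ⟨c, hc, rfl⟩
      refine ⟨a + b - c, mem_icc_rev hc, ?_⟩
      show f (a + b - (a + b - c)) = f c
      rw [show a + b - (a + b - c) = c by abel]
    · rintro ⟨c, hc, rfl⟩
      refine ⟨a + b - c, mem_icc_rev hc, ?_⟩
      show f (a + b - c) = f (a + b - c)
      rfl

lemma IsSegment.left_mem {s : Set X} {y z : X} (h : IsSegment d s y z) : y ∈ s := by
  obtain ⟨a, b, hab, f, hf, ha, hb, him⟩ := h
  rw [him]; exact ⟨a, ⟨le_refl a, hab⟩, ha⟩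

lemma IsSegment.right_mem {s : Set X} {y z : X} (h : IsSegment d s y z) : z ∈ s := by
  obtain ⟨a, b, hab, f, hf, ha, hb, him⟩ := h
  rw [him]; exact ⟨b, ⟨hab, le_refl b⟩, hb⟩

lemma IsSegment.between {s : Set X} {y z : X} (h : IsSegment d s y z)
    {p : X} (hp : p ∈ s) : d y p + d p z = d y z := by
  obtain ⟨a, b, hab, f, hf, ha, hb, him⟩ := h
  rw [him] at hp
  obtain ⟨c, hc, rfl⟩ := hp
  have h1 := hf a ⟨le_refl a, hab⟩ c hc
  have h2 := hf c hc b ⟨hab, le_refl b⟩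
  have h3 := hf a ⟨le_refl a, hab⟩ b ⟨hab, le_refl b⟩
  rw [← ha, ← hb, h1, h2, h3,
    abs_of_nonneg (sub_nonneg.2 hc.1), abs_of_nonneg (sub_nonneg.2 hc.2),
    abs_of_nonneg (sub_nonneg.2 hab)]
  abel

/-- The key median lemma: if `[x,p] = [x,y] ∩ [x,z]` then `p` lies between
`y` and `z`. -/
lemma median (htree : IsLambdaTree d) (x p y z : X)
    (hseg : seg d x p = seg d x y ∩ seg d x z) : d y p + d p z = d y z := by
  obtain ⟨hpos, heq0, hsymm, htri, hgeo, hT2, hT3⟩ := htree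
  have hpp : d p p = 0 := (heq0 p p).2 rfl
  have hpmem : p ∈ seg d x p := by simp [seg, hpp]
  have hpy : d x p + d p y = d x y := (hseg ▸ hpmem).1
  have hpz : d x p + d p z = d x z := (hseg ▸ hpmem).2
  obtain ⟨s₁, hs₁⟩ := hgeo p y
  obtain ⟨s₂, hs₂⟩ := hgeo p z
  obtain ⟨w, hw⟩ := hT3 s₁ s₂ p y z hs₁ hs₂
  -- first show `w = p`
  have hwmem : w ∈ s₁ ∩ s₂ := hw.right_mem
  have hwy : d p w + d w y = d p y := hs₁.between hwmem.1
  have hwz : d p w + d w z = d p z := hs₂.between hwmem.2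
  have htw : d x w ≤ d x p + d p w := by
    have := htri x w p; rwa [hsymm w p] at this
  have hxy : d x y ≤ d x w + d w y := by
    have := htri x y w; rwa [hsymm y w] at this
  have hxz : d x z ≤ d x w + d w z := by
    have := htri x z w; rwa [hsymm z w] at this
  have hA : d x w + d w y = d x y := by
    refine le_antisymm ?_ hxy
    calc d x w + d w y ≤ (d x p + d p w) + d w y := add_le_add_left htw _
      _ = d x p + (d p w + d w y) := add_assoc _ _ _
      _ = d x p + d p y := by rw [hwy]
      _ = d x y := hpy
  have hB : d x w + d w z = d x z := by
    refine le_antisymm ?_ hxz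
    calc d x w + d w z ≤ (d x p + d p w) + d w z := add_le_add_left htw _
      _ = d x p + (d p w + d w z) := add_assoc _ _ _
      _ = d x p + d p z := by rw [hwz]
      _ = d x z := hpz
  have hwseg : w ∈ seg d x p := by rw [hseg]; exact ⟨hA, hB⟩
  have hxw : d x w = d x p + d p w := by
    have h4 : d x w + d w y = (d x p + d p w) + d w y := by
      rw [hA, add_assoc, hwy, hpy]
    exact add_right_cancel h4
  have hwp : d x w + d w p = d x p := hwseg
  rw [hxw, hsymm w p] at hwp
  have h6 : d x p + (d p w + d p w) = d x p + 0 := by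
    rw [← add_assoc, hwp, add_zero]
  have h5 : d p w + d p w = 0 := add_left_cancel h6
  have hdpw : d p w = 0 := by
    refine le_antisymm ?_ (hpos p w)
    calc d p w ≤ d p w + d p w := le_add_of_nonneg_right (hpos p w)
      _ = 0 := h5
  have hweq : p = w := (heq0 p w).1 hdpw
  subst hweq
  -- hence `s₁ ∩ s₂ = {p}`
  have hinter : s₁ ∩ s₂ = {p} := by
    obtain ⟨a, b, hab, f, hf, ha, hb, him⟩ := hw
    have hba : b = a := by
      have h3 := hf a ⟨le_refl a, hab⟩ b ⟨hab, le_refl b⟩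
      rw [ha, hb, hpp] at h3
      exact sub_eq_zero.1 (abs_eq_zero.1 h3.symm)
    subst hba
    rw [him, Set.Icc_self, Set.image_singleton, ha]
  have hunion := hT2 s₁ s₂ y p z hs₁.rev hs₂
    (by rw [Set.inter_comm] at hinter ⊢; exact hinter)
  exact hunion.between (Set.mem_union_left _ hs₁.left_mem)

end aux

/-- If an isometric action of `G` on a Λ-tree is regular with respect to the base
point `x`, then the based length function `l_x` is regular. (The condition
`l_x u = c(g,h)` is stated as `2 l_x u = l_x g + l_x h - l_x (g⁻¹ h)`.) -/
theorem regular_action_implies_regular_length {Λ : Type*}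
    [AddCommGroup Λ] [LinearOrder Λ] [IsOrderedAddMonoid Λ] {X : Type*} {G : Type*} [Group G] [MulAction G X]
    (d : X → X → Λ) (htree : IsLambdaTree d)
    (hiso : ∀ (g : G) (y z : X), d (g • y) (g • z) = d y z) (x : X)
    (hreg : ∀ g h : G, ∃ f : G,
      seg d x (f • x) = seg d x (g • x) ∩ seg d x (h • x)) :
    ∀ g h : G, ∃ u g₁ h₁ : G, g = u * g₁ ∧ h = u * h₁ ∧
      d x (g • x) = d x (u • x) + d x (g₁ • x) ∧
      d x (h • x) = d x (u • x) + d x (h₁ • x) ∧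
      d x (u • x) + d x (u • x) =
        d x (g • x) + d x (h • x) - d x ((g⁻¹ * h) • x) := by
  intro g h
  obtain ⟨f, hf⟩ := hreg g h
  have hpp : d (f • x) (f • x) = 0 := (htree.2.1 _ _).2 rfl
  have hmem : f • x ∈ seg d x (f • x) := by simp [seg, hpp]
  have hg : d x (f • x) + d (f • x) (g • x) = d x (g • x) := (hf ▸ hmem).1
  have hh : d x (f • x) + d (f • x) (h • x) = d x (h • x) := (hf ▸ hmem).2
  refine ⟨f, f⁻¹ * g, f⁻¹ * h, by group, by group, ?_, ?_, ?_⟩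
  · have h1 : d x ((f⁻¹ * g) • x) = d (f • x) (g • x) := by
      rw [← hiso f x ((f⁻¹ * g) • x), smul_smul]; simp
    rw [h1]; exact hg.symm
  · have h1 : d x ((f⁻¹ * h) • x) = d (f • x) (h • x) := by
      rw [← hiso f x ((f⁻¹ * h) • x), smul_smul]; simp
    rw [h1]; exact hh.symm
  · have hmed := median htree x (f • x) (g • x) (h • x) hf
    rw [htree.2.2.1 (g • x) (f • x)] at hmed
    have h1 : d x ((g⁻¹ * h) • x) = d (g • x) (h • x) := by
      rw [← hiso g x ((g⁻¹ * h) • x), smul_smul]; simp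
    rw [h1, ← hg, ← hh, ← hmed]
    abel
end

section
/- Let a group G act minimally by isometries on a Λ-tree Γ (i.e., Γ has no nonempty proper G-invariant subtree), and suppose the action is regular with respect to a point x ∈ Γ. Then every branch point of Γ lies in the orbit G·x; in particular, all branch points of Γ are G-equivalent. -/
namespace LTree

variable {Λ : Type*} [AddCommGroup Λ] [LinearOrder Λ] [IsOrderedAddMonoid Λ] {X : Type*} {d : X → X → Λ}

lemma two_zero {a b : Λ} (ha : 0 ≤ a) (hb : 0 ≤ b) (h : a + b ≤ 0) : a = 0 :=
  le_antisymm (by calc a ≤ a + b := le_add_of_nonneg_right hb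
                    _ ≤ 0 := h) ha

lemma dist_self (H : IsLambdaTree d) (a : X) : d a a = 0 := (H.2.1 a a).mpr rfl

lemma seg_mem_left (H : IsLambdaTree d) (a b : X) : a ∈ seg d a b := by
  show d a a + d a b = d a b
  rw [dist_self H, zero_add]

lemma seg_mem_right (H : IsLambdaTree d) (a b : X) : b ∈ seg d a b := by
  show d a b + d b b = d a b
  rw [dist_self H, add_zero]

lemma seg_comm (H : IsLambdaTree d) (a b : X) : seg d a b = seg d b a := by
  ext w
  show d a w + d w b = d a b ↔ d b w + d w a = d b a
  rw [H.2.2.1 a w, H.2.2.1 w b, H.2.2.1 a b, add_comm]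

lemma seg_self (H : IsLambdaTree d) (a : X) : seg d a a = {a} := by
  ext w
  simp only [Set.mem_singleton_iff]
  constructor
  · intro hw
    have hw2 : d a w + d w a = d a a := hw
    rw [dist_self H a] at hw2
    have := two_zero (H.1 a w) (H.1 w a) (le_of_eq hw2)
    exact ((H.2.1 a w).mp this).symm
  · rintro rfl; exact seg_mem_left H w w

lemma isSegment_left_mem {s : Set X} {y z : X} (hS : IsSegment d s y z) : y ∈ s := by
  obtain ⟨a, b, hab, f, hf, hfa, hfb, rfl⟩ := hS
  exact ⟨a, ⟨le_refl a, hab⟩, hfa⟩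

lemma isSegment_right_mem {s : Set X} {y z : X} (hS : IsSegment d s y z) : z ∈ s := by
  obtain ⟨a, b, hab, f, hf, hfa, hfb, rfl⟩ := hS
  exact ⟨b, ⟨hab, le_refl b⟩, hfb⟩

lemma isSegment_subset_seg {s : Set X} {y z : X} (hS : IsSegment d s y z) :
    s ⊆ seg d y z := by
  obtain ⟨a, b, hab, f, hf, hfa, hfb, rfl⟩ := hS
  rintro w ⟨c, hc, rfl⟩
  have hya : (a : Λ) ∈ Set.Icc a b := ⟨le_refl a, hab⟩
  have hyb : (b : Λ) ∈ Set.Icc a b := ⟨hab, le_refl b⟩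
  show d y (f c) + d (f c) z = d y z
  rw [← hfa, ← hfb, hf a hya c hc, hf c hc b hyb, hf a hya b hyb,
    abs_of_nonneg (sub_nonneg.mpr hc.1), abs_of_nonneg (sub_nonneg.mpr hc.2),
    abs_of_nonneg (sub_nonneg.mpr hab)]
  abel

lemma isSegment_exists {s : Set X} {y z : X} (hS : IsSegment d s y z)
    {t : Λ} (ht0 : 0 ≤ t) (htd : t ≤ d y z) : ∃ p ∈ s, d y p = t := by
  obtain ⟨a, b, hab, f, hf, hfa, hfb, rfl⟩ := hS
  have hya : (a : Λ) ∈ Set.Icc a b := ⟨le_refl a, hab⟩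
  have hyb : (b : Λ) ∈ Set.Icc a b := ⟨hab, le_refl b⟩
  have hd : d y z = b - a := by
    rw [← hfa, ← hfb, hf a hya b hyb, abs_of_nonneg (sub_nonneg.mpr hab)]
  have hmem : a + t ∈ Set.Icc a b := by
    constructor
    · exact le_add_of_nonneg_right ht0
    · have : t ≤ b - a := hd ▸ htd
      calc a + t ≤ a + (b - a) := add_le_add_right this a
        _ = b := by abel
  refine ⟨f (a + t), ⟨a + t, hmem, rfl⟩, ?_⟩
  rw [← hfa, hf a hya (a + t) hmem]
  rw [add_sub_cancel_left, abs_of_nonneg ht0]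

lemma isSegment_inj {s : Set X} {y z : X} (hS : IsSegment d s y z)
    {p q : X} (hp : p ∈ s) (hq : q ∈ s) (hd : d y p = d y q) : p = q := by
  obtain ⟨a, b, hab, f, hf, hfa, hfb, rfl⟩ := hS
  obtain ⟨c, hc, rfl⟩ := hp
  obtain ⟨c', hc', rfl⟩ := hq
  have hya : (a : Λ) ∈ Set.Icc a b := ⟨le_refl a, hab⟩
  have h1 : d y (f c) = c - a := by
    rw [← hfa, hf a hya c hc, abs_of_nonneg (sub_nonneg.mpr hc.1)]
  have h2 : d y (f c') = c' - a := by
    rw [← hfa, hf a hya c' hc', abs_of_nonneg (sub_nonneg.mpr hc'.1)]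
  have : c = c' := by
    have := h1 ▸ h2 ▸ hd
    exact sub_left_injective this
  rw [this]

lemma isSegment_eq_of_subset (H : IsLambdaTree d) {s s' : Set X} {y z : X}
    (hS : IsSegment d s y z) (hS' : IsSegment d s' y z) (hsub : s' ⊆ s) : s = s' := by
  apply Set.Subset.antisymm _ hsub
  intro p hp
  have hpz : p ∈ seg d y z := isSegment_subset_seg hS hp
  have h0 : 0 ≤ d y p := H.1 y p
  have h1 : d y p ≤ d y z := by
    calc d y p ≤ d y p + d p z := le_add_of_nonneg_right (H.1 p z)
      _ = d y z := hpz
  obtain ⟨q, hq, hqd⟩ := isSegment_exists hS' h0 h1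
  have : p = q := isSegment_inj hS hp (hsub hq) hqd.symm
  rw [this]; exact hq

lemma isSegment_unique (H : IsLambdaTree d) {s s' : Set X} {y z : X}
    (hS : IsSegment d s y z) (hS' : IsSegment d s' y z) : s = s' := by
  obtain ⟨w, hw⟩ := H.2.2.2.2.2.2 s s' y z z hS hS'
  -- hw : IsSegment d (s ∩ s') y w
  have hzmem : z ∈ s ∩ s' := ⟨isSegment_right_mem hS, isSegment_right_mem hS'⟩
  have h1 : d y z + d z w = d y w := isSegment_subset_seg hw hzmem
  have hwmem : w ∈ s ∩ s' := isSegment_right_mem hw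
  have h2 : d y w + d w z = d y z := isSegment_subset_seg hS hwmem.1
  have hz0 : d z w = 0 := by
    have hsum : d z w + d w z ≤ 0 := by
      have : (d y z + d z w) + d w z = d y z := by rw [h1]; exact h2
      have h3 : d y z + (d z w + d w z) = d y z + 0 := by
        rw [add_zero]; rw [← add_assoc]; exact this
      exact le_of_eq (add_left_cancel h3)
    exact two_zero (H.1 z w) (H.1 w z) hsum
  have hwz : w = z := ((H.2.1 z w).mp hz0).symm
  rw [hwz] at hw
  have e1 := isSegment_eq_of_subset H hS hw Set.inter_subset_left
  have e2 := isSegment_eq_of_subset H hS' hw Set.inter_subset_right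
  exact e1.trans e2.symm

lemma seg_isSegment (H : IsLambdaTree d) (y z : X) : IsSegment d (seg d y z) y z := by
  obtain ⟨s, hS⟩ := H.2.2.2.2.1 y z
  have : s = seg d y z := by
    apply Set.Subset.antisymm (isSegment_subset_seg hS)
    intro w hw
    obtain ⟨s₁, hS₁⟩ := H.2.2.2.2.1 y w
    obtain ⟨s₂, hS₂⟩ := H.2.2.2.2.1 w z
    have hinter : s₁ ∩ s₂ = {w} := by
      apply Set.Subset.antisymm
      · rintro p ⟨hp₁, hp₂⟩
        have e1 : d y p + d p w = d y w := isSegment_subset_seg hS₁ hp₁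
        have e2 : d w p + d p z = d w z := isSegment_subset_seg hS₂ hp₂
        have tri : d y z ≤ d y p + d z p := H.2.2.2.1 y z p
        -- d y w + d w z = d y z (hw)
        have key : d p w + d w p ≤ 0 := by
          have c1 : d y p + d z p + (d p w + d w p) = d y z := by
            have : (d y p + d p w) + (d w p + d p z) = d y w + d w z := by rw [e1, e2]
            rw [hw] at this
            rw [← this, H.2.2.1 z p]
            abel
          calc d p w + d w p = (d y p + d z p + (d p w + d w p)) - (d y p + d z p) := by abel
            _ ≤ 0 := by rw [c1]; exact sub_nonpos.mpr tri
        have : d p w = 0 := two_zero (H.1 p w) (H.1 w p) key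
        exact (H.2.1 p w).mp this
      · rintro p rfl
        exact ⟨isSegment_right_mem hS₁, isSegment_left_mem hS₂⟩
    have hunion : IsSegment d (s₁ ∪ s₂) y z := H.2.2.2.2.2.1 s₁ s₂ y w z hS₁ hS₂ hinter
    have : s = s₁ ∪ s₂ := isSegment_unique H hS hunion
    rw [this]
    exact Set.mem_union_left _ (isSegment_right_mem hS₁)
  rw [← this]; exact hS

lemma seg_eq_of_isSegment (H : IsLambdaTree d) {s : Set X} {y z : X}
    (hS : IsSegment d s y z) : s = seg d y z :=
  isSegment_unique H hS (seg_isSegment H y z)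
lemma sub_isSegment {a b : Λ} {f : Λ → X}
    (hf : ∀ c ∈ Set.Icc a b, ∀ c' ∈ Set.Icc a b, d (f c) (f c') = |c' - c|)
    {s t : Λ} (hs : s ∈ Set.Icc a b) (ht : t ∈ Set.Icc a b) (hst : s ≤ t) :
    IsSegment d (f '' Set.Icc s t) (f s) (f t) := by
  refine ⟨s, t, hst, f, ?_, rfl, rfl, rfl⟩
  intro c hc c' hc'
  exact hf c ⟨le_trans hs.1 hc.1, le_trans hc.2 ht.2⟩ c' ⟨le_trans hs.1 hc'.1, le_trans hc'.2 ht.2⟩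

lemma seg_subset (H : IsLambdaTree d) {y z u v : X}
    (hu : u ∈ seg d y z) (hv : v ∈ seg d y z) : seg d u v ⊆ seg d y z := by
  obtain ⟨a, b, hab, f, hf, hfa, hfb, himg⟩ := seg_isSegment H y z
  rw [himg] at hu hv
  obtain ⟨s, hs, rfl⟩ := hu
  obtain ⟨t, ht, rfl⟩ := hv
  rcases le_total s t with hst | hts
  · have := sub_isSegment hf hs ht hst
    have heq := seg_eq_of_isSegment H this
    rw [← heq, himg]
    exact Set.image_mono (f := f) (Set.Icc_subset_Icc hs.1 ht.2)
  · have := sub_isSegment hf ht hs hts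
    have heq := seg_eq_of_isSegment H this
    rw [seg_comm H, ← heq, himg]
    exact Set.image_mono (f := f) (Set.Icc_subset_Icc ht.1 hs.2)

lemma mem_seg_mono (H : IsLambdaTree d) {y z u v : X}
    (hu : u ∈ seg d y z) (hv : v ∈ seg d y z) (hd : d y u ≤ d y v) : u ∈ seg d y v := by
  obtain ⟨a, b, hab, f, hf, hfa, hfb, himg⟩ := seg_isSegment H y z
  rw [himg] at hu hv
  obtain ⟨s, hs, rfl⟩ := hu
  obtain ⟨t, ht, rfl⟩ := hv
  have hya : (a : Λ) ∈ Set.Icc a b := ⟨le_refl a, hab⟩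
  have e1 : d y (f s) = s - a := by
    rw [← hfa, hf a hya s hs, abs_of_nonneg (sub_nonneg.mpr hs.1)]
  have e2 : d y (f t) = t - a := by
    rw [← hfa, hf a hya t ht, abs_of_nonneg (sub_nonneg.mpr ht.1)]
  have hst : s ≤ t := by
    rw [e1, e2] at hd
    exact sub_le_sub_iff_right a |>.mp hd
  show d y (f s) + d (f s) (f t) = d y (f t)
  rw [e1, e2, hf s hs t ht, abs_of_nonneg (sub_nonneg.mpr hst)]
  abel

lemma seg_split (H : IsLambdaTree d) {y z m : X} (hm : m ∈ seg d y z) :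
    seg d y z ⊆ seg d y m ∪ seg d m z := by
  intro p hp
  rcases le_total (d y p) (d y m) with h | h
  · exact Or.inl (mem_seg_mono H hp hm h)
  · right
    have hmp : m ∈ seg d y p := mem_seg_mono H hm hp h
    -- hmp : d y m + d m p = d y p ; hp : d y p + d p z = d y z ; hm : d y m + d m z = d y z
    -- goal : d m p + d p z = d m z
    have hmp' : d y m + d m p = d y p := hmp
    have hp' : d y p + d p z = d y z := hp
    have hm' : d y m + d m z = d y z := hm
    have : d y m + (d m p + d p z) = d y m + d m z := by
      rw [← add_assoc, hmp', hp', hm']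
    exact add_left_cancel this

lemma median (H : IsLambdaTree d) (u v w : X) :
    ∃ m, m ∈ seg d u v ∧ m ∈ seg d u w ∧ m ∈ seg d v w ∧
      seg d u v ∩ seg d u w = seg d u m := by
  obtain ⟨m, hm⟩ := H.2.2.2.2.2.2 (seg d u v) (seg d u w) u v w
    (seg_isSegment H u v) (seg_isSegment H u w)
  have hinter : seg d u v ∩ seg d u w = seg d u m := seg_eq_of_isSegment H hm
  have hmm : m ∈ seg d u m := seg_mem_right H u m
  have hmem : m ∈ seg d u v ∩ seg d u w := hinter ▸ hmm
  refine ⟨m, hmem.1, hmem.2, ?_, hinter⟩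
  -- show m ∈ seg d v w via T2
  have hkey : seg d v m ∩ seg d m w = {m} := by
    apply Set.Subset.antisymm
    · rintro p ⟨hp₁, hp₂⟩
      have hsub1 : seg d v m ⊆ seg d u v :=
        seg_subset H (seg_mem_right H u v) hmem.1
      have hsub2 : seg d m w ⊆ seg d u w :=
        seg_subset H hmem.2 (seg_mem_right H u w)
      have hpum : p ∈ seg d u m := by
        rw [← hinter]; exact ⟨hsub1 hp₁, hsub2 hp₂⟩
      -- arith: p ∈ seg u m, p ∈ seg u v, p ∈ seg v m, m ∈ seg u v ⇒ p = m
      have a1 : d u p + d p m = d u m := hpum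
      have a2 : d u p + d p v = d u v := hsub1 hp₁
      have a3 : d v p + d p m = d v m := hp₁
      have a4 : d u m + d m v = d u v := hmem.1
      have hpm0 : d p m = 0 := by
        apply two_zero (H.1 p m) (H.1 p m) -- d p m + d p m ≤ 0
        have c1 : d p v = d p m + d m v := by
          have : d u p + d p v = (d u p + d p m) + d m v := by
            rw [a2, a1, a4]
          rw [add_assoc] at this
          exact add_left_cancel this
        have c2 : d p v = d v m - d p m := by
          rw [← a3, H.2.2.1 p v]; abel
        have e : d p m + d m v = d v m - d p m := by rw [← c1, c2]
        have h2 : d p m + d p m = 0 := by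
          rw [H.2.2.1 m v] at e
          calc d p m + d p m = (d p m + d v m) - (d v m - d p m) := by abel
            _ = 0 := by rw [e]; abel
        exact le_of_eq h2
      exact Set.mem_singleton_iff.mpr ((H.2.1 p m).mp hpm0)
    · rintro p rfl
      exact ⟨seg_mem_right H v p, seg_mem_left H p w⟩
  have hu2 : IsSegment d (seg d v m ∪ seg d m w) v w :=
    H.2.2.2.2.2.1 _ _ v m w (seg_isSegment H v m) (seg_isSegment H m w) hkey
  exact isSegment_subset_seg hu2 (Set.mem_union_left _ (seg_mem_right H v m))

lemma noshare_mem_seg (H : IsLambdaTree d) {y p z : X}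
    (h : seg d y p ∩ seg d y z = {y}) : y ∈ seg d p z := by
  have h' : seg d p y ∩ seg d y z = {y} := by rw [seg_comm H p y]; exact h
  have := H.2.2.2.2.2.1 _ _ p y z (seg_isSegment H p y) (seg_isSegment H y z) h'
  exact isSegment_subset_seg this (Set.mem_union_left _ (seg_mem_right H p y))

lemma mem_seg_noshare (H : IsLambdaTree d) {y a b : X} (hy : y ∈ seg d a b) :
    seg d y a ∩ seg d y b = {y} := by
  apply Set.Subset.antisymm
  · rintro p ⟨hp₁, hp₂⟩
    have e1 : d y p + d p a = d y a := hp₁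
    have e2 : d y p + d p b = d y b := hp₂
    have e3 : d a y + d y b = d a b := hy
    have tri : d a b ≤ d a p + d b p := H.2.2.2.1 a b p
    have hyp0 : d y p = 0 := by
      apply two_zero (H.1 y p) (H.1 y p)
      have c1 : d a p = d y a - d y p := by
        rw [← e1, H.2.2.1 a p]; abel
      have c2 : d b p = d y b - d y p := by
        rw [← e2, H.2.2.1 b p]; abel
      have c3 : d a b = d y a + d y b := by
        rw [← e3, H.2.2.1 a y]
      rw [c1, c2, c3] at tri
      calc d y p + d y p = (d y a + d y b) - (d y a - d y p + (d y b - d y p)) := by abel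
        _ ≤ 0 := sub_nonpos.mpr tri
    exact Set.mem_singleton_iff.mpr (((H.2.1 y p).mp hyp0).symm)
  · rintro p rfl
    exact ⟨seg_mem_left H p a, seg_mem_left H p b⟩

lemma share_trans (H : IsLambdaTree d) {y a b c : X}
    (h₁ : ∃ u, u ∈ seg d y a ∩ seg d y b ∧ u ≠ y)
    (h₂ : ∃ v, v ∈ seg d y b ∩ seg d y c ∧ v ≠ y)
    (h₃ : seg d y a ∩ seg d y c = {y}) : False := by
  obtain ⟨u, ⟨hua, hub⟩, huy⟩ := h₁
  obtain ⟨v, ⟨hvb, hvc⟩, hvy⟩ := h₂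
  rcases le_total (d y u) (d y v) with h | h
  · have : u ∈ seg d y v := mem_seg_mono H hub hvb h
    have : u ∈ seg d y c := seg_subset H (seg_mem_left H y c) hvc this
    have hmem : u ∈ seg d y a ∩ seg d y c := ⟨hua, this⟩
    rw [h₃] at hmem
    exact huy hmem
  · have : v ∈ seg d y u := mem_seg_mono H hvb hub h
    have : v ∈ seg d y a := seg_subset H (seg_mem_left H y a) hua this
    have hmem : v ∈ seg d y a ∩ seg d y c := ⟨this, hvc⟩
    rw [h₃] at hmem
    exact hvy hmem

lemma hull1 (H : IsLambdaTree d) {u a b c : X} (hu : u ∈ seg d a b) :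
    seg d u c ⊆ seg d a b ∪ seg d a c := by
  obtain ⟨m, hm1, hm2, hm3, _⟩ := median H u c a
  intro p hp
  rcases seg_split H hm1 hp with h | h
  · left
    have h1 : seg d u m ⊆ seg d u a := seg_subset H (seg_mem_left H u a) hm2
    have h2 : seg d u a ⊆ seg d a b := by
      rw [seg_comm H u a]
      exact seg_subset H (seg_mem_left H a b) hu
    exact h2 (h1 h)
  · right
    have h1 : seg d m c ⊆ seg d a c := by
      have hm3' : m ∈ seg d a c := by rw [seg_comm H a c]; exact hm3
      exact seg_subset H hm3' (seg_mem_right H a c)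
    exact h1 h

lemma hull2 (H : IsLambdaTree d) {u v a b e k : X}
    (hu : u ∈ seg d a b) (hv : v ∈ seg d e k) :
    seg d u v ⊆ (seg d a b ∪ seg d a e) ∪ seg d e k := by
  obtain ⟨m, hm1, hm2, hm3, _⟩ := median H u v e
  intro p hp
  rcases seg_split H hm1 hp with h | h
  · left
    have h1 : seg d u m ⊆ seg d u e := seg_subset H (seg_mem_left H u e) hm2
    exact hull1 H hu (h1 h)
  · right
    have h1 : seg d m v ⊆ seg d e v := by
      have hm3' : m ∈ seg d e v := by rw [seg_comm H e v]; exact hm3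
      exact seg_subset H hm3' (seg_mem_right H e v)
    have h2 : seg d e v ⊆ seg d e k := seg_subset H (seg_mem_left H e k) hv
    exact h2 (h1 (h : p ∈ seg d m v))


end LTree

/-- `y` is a branch point of the Λ-tree: the median of three points not lying
on a common segment. -/
def IsBranchPoint {Λ : Type*} [AddCommGroup Λ] [LinearOrder Λ] [IsOrderedAddMonoid Λ] {X : Type*}
    (d : X → X → Λ) (y : X) : Prop :=
  ∃ a b c : X, y ∈ seg d a b ∧ y ∈ seg d b c ∧ y ∈ seg d a c ∧
    a ∉ seg d b c ∧ b ∉ seg d a c ∧ c ∉ seg d a b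

/-- If `G` acts minimally on a Λ-tree and the action is regular with respect to
`x`, then every branch point lies in the orbit `G • x`; in particular all
branch points are `G`-equivalent. -/
theorem branch_points_in_orbit_of_minimal_regular {Λ : Type*}
    [AddCommGroup Λ] [LinearOrder Λ] [IsOrderedAddMonoid Λ] {X : Type*} {G : Type*} [Group G] [MulAction G X]
    (d : X → X → Λ) (htree : IsLambdaTree d)
    (hiso : ∀ (g : G) (y z : X), d (g • y) (g • z) = d y z)
    (hmin : ∀ S : Set X, S.Nonempty → (∀ y ∈ S, ∀ z ∈ S, seg d y z ⊆ S) →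
      (∀ (g : G), ∀ y ∈ S, g • y ∈ S) → S = Set.univ)
    (x : X)
    (hreg : ∀ g h : G, ∃ f : G,
      seg d x (f • x) = seg d x (g • x) ∩ seg d x (h • x)) :
    (∀ y : X, IsBranchPoint d y → ∃ g : G, y = g • x) ∧
    (∀ y z : X, IsBranchPoint d y → IsBranchPoint d z → ∃ g : G, z = g • y) := by
    classical
  have H := htree
  have hsmul : ∀ (k : G) (u v w : X), w ∈ seg d u v → k • w ∈ seg d (k • u) (k • v) := by
    intro k u v w hw
    show d (k • u) (k • w) + d (k • w) (k • v) = d (k • u) (k • v)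
    rw [hiso, hiso, hiso]
    exact hw
  have hTuniv : {w : X | ∃ g h : G, w ∈ seg d (g • x) (h • x)} = Set.univ := by
    apply hmin
    · exact ⟨x, 1, 1, by rw [one_smul]; exact LTree.seg_mem_left H x x⟩
    · rintro u ⟨g₁, g₂, hu⟩ v ⟨g₃, g₄, hv⟩ p hp
      rcases LTree.hull2 H hu hv hp with (h | h) | h
      · exact ⟨g₁, g₂, h⟩
      · exact ⟨g₁, g₃, h⟩
      · exact ⟨g₃, g₄, h⟩
    · rintro k u ⟨g, h, hu⟩
      exact ⟨k * g, k * h, by rw [mul_smul, mul_smul]; exact hsmul k _ _ _ hu⟩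
  have part1 : ∀ y : X, IsBranchPoint d y → ∃ g : G, y = g • x := by
    intro y hy
    obtain ⟨a, b, c, hyab, hybc, hyac, hna, hnb, hnc⟩ := hy
    have hay : a ≠ y := fun h => hna (by rw [h]; exact hybc)
    have hby : b ≠ y := fun h => hnb (by rw [h]; exact hyac)
    have hcy : c ≠ y := fun h => hnc (by rw [h]; exact hyab)
    have nab : seg d y a ∩ seg d y b = {y} := LTree.mem_seg_noshare H hyab
    have nbc : seg d y b ∩ seg d y c = {y} := LTree.mem_seg_noshare H hybc
    have nac : seg d y a ∩ seg d y c = {y} := LTree.mem_seg_noshare H hyac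
    have hyT : y ∈ {w : X | ∃ g h : G, w ∈ seg d (g • x) (h • x)} := by
      rw [hTuniv]; trivial
    obtain ⟨g₁, g₂, hy12⟩ := hyT
    set p := g₁ • x with hpdef
    set q := g₂ • x with hqdef
    have key : ∀ z₁ z₂ w : X, seg d y z₁ ∩ seg d y z₂ = {y} →
        (∃ u, u ∈ seg d y z₁ ∩ seg d y w ∧ u ≠ y) →
        (∃ v, v ∈ seg d y z₂ ∩ seg d y w ∧ v ≠ y) → False := by
      intro z₁ z₂ w hn h₁ h₂
      obtain ⟨v, ⟨hv1, hv2⟩, hvy⟩ := h₂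
      exact LTree.share_trans H h₁ ⟨v, ⟨hv2, hv1⟩, hvy⟩ hn
    have main : ∃ z : X, z ≠ y ∧ ¬(∃ u, u ∈ seg d y z ∩ seg d y p ∧ u ≠ y) ∧
        ¬(∃ u, u ∈ seg d y z ∩ seg d y q ∧ u ≠ y) := by
      by_cases hap : ∃ u, u ∈ seg d y a ∩ seg d y p ∧ u ≠ y
      · have hbp : ¬ ∃ u, u ∈ seg d y b ∩ seg d y p ∧ u ≠ y :=
          fun h => key a b p nab hap h
        have hcp : ¬ ∃ u, u ∈ seg d y c ∩ seg d y p ∧ u ≠ y :=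
          fun h => key a c p nac hap h
        by_cases hbq : ∃ u, u ∈ seg d y b ∩ seg d y q ∧ u ≠ y
        · have hcq : ¬ ∃ u, u ∈ seg d y c ∩ seg d y q ∧ u ≠ y :=
            fun h => key b c q nbc hbq h
          exact ⟨c, hcy, hcp, hcq⟩
        · exact ⟨b, hby, hbp, hbq⟩
      · by_cases haq : ∃ u, u ∈ seg d y a ∩ seg d y q ∧ u ≠ y
        · have hbq : ¬ ∃ u, u ∈ seg d y b ∩ seg d y q ∧ u ≠ y :=
            fun h => key a b q nab haq h
          by_cases hbp : ∃ u, u ∈ seg d y b ∩ seg d y p ∧ u ≠ y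
          · have hcp : ¬ ∃ u, u ∈ seg d y c ∩ seg d y p ∧ u ≠ y :=
              fun h => key b c p nbc hbp h
            have hcq : ¬ ∃ u, u ∈ seg d y c ∩ seg d y q ∧ u ≠ y :=
              fun h => key a c q nac haq h
            exact ⟨c, hcy, hcp, hcq⟩
          · exact ⟨b, hby, hbp, hbq⟩
        · exact ⟨a, hay, hap, haq⟩
    obtain ⟨z, hzy, hzp, hzq⟩ := main
    have conv : ∀ w : X, ¬(∃ u, u ∈ seg d y z ∩ seg d y w ∧ u ≠ y) →
        seg d y z ∩ seg d y w = {y} := by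
      intro w hw
      apply Set.Subset.antisymm
      · intro u hu
        by_contra hne
        exact hw ⟨u, hu, fun h => hne (Set.mem_singleton_iff.mpr h)⟩
      · intro u hu
        rw [Set.mem_singleton_iff.mp hu]
        exact ⟨LTree.seg_mem_left H y z, LTree.seg_mem_left H y w⟩
    have hzp' := conv p hzp
    have hzq' := conv q hzq
    have hzT : z ∈ {w : X | ∃ g h : G, w ∈ seg d (g • x) (h • x)} := by
      rw [hTuniv]; trivial
    obtain ⟨g₃, g₄, hz34⟩ := hzT
    obtain ⟨m, hm1, hm2, hm3, _⟩ := LTree.median H y (g₃ • x) (g₄ • x)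
    have hsplit := LTree.seg_split H hm3 hz34
    have hw : ∃ gw : G, ∃ u, u ∈ seg d y z ∩ seg d y (gw • x) ∧ u ≠ y := by
      rcases hsplit with h | h
      · refine ⟨g₃, z, ⟨LTree.seg_mem_right H y z, ?_⟩, hzy⟩
        have hsub : seg d (g₃ • x) m ⊆ seg d y (g₃ • x) := by
          rw [LTree.seg_comm H (g₃ • x) m]
          exact LTree.seg_subset H hm1 (LTree.seg_mem_right H y (g₃ • x))
        exact hsub h
      · refine ⟨g₄, z, ⟨LTree.seg_mem_right H y z, ?_⟩, hzy⟩
        have hsub : seg d m (g₄ • x) ⊆ seg d y (g₄ • x) :=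
          LTree.seg_subset H hm2 (LTree.seg_mem_right H y (g₄ • x))
        exact hsub h
    obtain ⟨gw, hShare⟩ := hw
    set w := gw • x with hwdef
    have nwp : seg d y w ∩ seg d y p = {y} := by
      apply Set.Subset.antisymm
      · intro u hu
        by_contra hne
        exact LTree.share_trans H hShare
          ⟨u, hu, fun hh => hne (Set.mem_singleton_iff.mpr hh)⟩ hzp'
      · intro u hu
        rw [Set.mem_singleton_iff.mp hu]
        exact ⟨LTree.seg_mem_left H y w, LTree.seg_mem_left H y p⟩
    have nwq : seg d y w ∩ seg d y q = {y} := by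
      apply Set.Subset.antisymm
      · intro u hu
        by_contra hne
        exact LTree.share_trans H hShare
          ⟨u, hu, fun hh => hne (Set.mem_singleton_iff.mpr hh)⟩ hzq'
      · intro u hu
        rw [Set.mem_singleton_iff.mp hu]
        exact ⟨LTree.seg_mem_left H y w, LTree.seg_mem_left H y q⟩
    have hypw : y ∈ seg d p w := by
      apply LTree.noshare_mem_seg H
      rw [Set.inter_comm]; exact nwp
    have hyqw : y ∈ seg d q w := by
      apply LTree.noshare_mem_seg H
      rw [Set.inter_comm]; exact nwq
    -- translate everything by g₁⁻¹
    have e0 : g₁⁻¹ • p = x := by rw [hpdef]; exact inv_smul_smul g₁ x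
    have e1 : g₁⁻¹ • q = (g₁⁻¹ * g₂) • x := by rw [hqdef, mul_smul]
    have e2 : g₁⁻¹ • w = (g₁⁻¹ * gw) • x := by rw [hwdef, mul_smul]
    have h1' : g₁⁻¹ • y ∈ seg d x ((g₁⁻¹ * g₂) • x) := by
      have := hsmul g₁⁻¹ p q y hy12
      rwa [e0, e1] at this
    have h2' : g₁⁻¹ • y ∈ seg d x ((g₁⁻¹ * gw) • x) := by
      have := hsmul g₁⁻¹ p w y hypw
      rwa [e0, e2] at this
    have h3' : g₁⁻¹ • y ∈ seg d ((g₁⁻¹ * g₂) • x) ((g₁⁻¹ * gw) • x) := by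
      have := hsmul g₁⁻¹ q w y hyqw
      rwa [e1, e2] at this
    obtain ⟨f, hf⟩ := hreg (g₁⁻¹ * g₂) (g₁⁻¹ * gw)
    set y' := g₁⁻¹ • y with hy'def
    set u := (g₁⁻¹ * g₂) • x with hudef
    set v := (g₁⁻¹ * gw) • x with hvdef
    have hym : y' ∈ seg d x (f • x) := by rw [hf]; exact ⟨h1', h2'⟩
    have hfm : f • x ∈ seg d x u ∧ f • x ∈ seg d x v := by
      have hm : f • x ∈ seg d x (f • x) := LTree.seg_mem_right H x (f • x)
      rw [hf] at hm; exact hm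
    have E1 : d x y' + d y' u = d x u := h1'
    have E2 : d x (f • x) + d (f • x) u = d x u := hfm.1
    have E3 : d x y' + d y' v = d x v := h2'
    have E4 : d x (f • x) + d (f • x) v = d x v := hfm.2
    have E5 : d u y' + d y' v = d u v := h3'
    have E6 : d x y' + d y' (f • x) = d x (f • x) := hym
    have c1 : d (f • x) u = d y' u - d y' (f • x) := by
      have h : d x (f • x) + d (f • x) u = d x y' + d y' u := by rw [E2, ← E1]
      rw [← E6, add_assoc] at h
      have h2 : d y' (f • x) + d (f • x) u = d y' u := add_left_cancel h
      rw [← h2]; abel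
    have c2 : d (f • x) v = d y' v - d y' (f • x) := by
      have h : d x (f • x) + d (f • x) v = d x y' + d y' v := by rw [E4, ← E3]
      rw [← E6, add_assoc] at h
      have h2 : d y' (f • x) + d (f • x) v = d y' v := add_left_cancel h
      rw [← h2]; abel
    have main_ineq : d y' (f • x) + d y' (f • x) ≤ 0 := by
      have t2 : d u v ≤ d (f • x) u + d (f • x) v := by
        rw [H.2.2.1 (f • x) u, H.2.2.1 (f • x) v]
        exact H.2.2.2.1 u v (f • x)
      rw [c1, c2] at t2
      have e5' : d u v = d y' u + d y' v := by rw [← E5, H.2.2.1 u y']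
      rw [e5'] at t2
      calc d y' (f • x) + d y' (f • x)
          = (d y' u + d y' v) - ((d y' u - d y' (f • x)) + (d y' v - d y' (f • x))) := by abel
        _ ≤ 0 := sub_nonpos.mpr t2
    have hD : d y' (f • x) = 0 :=
      LTree.two_zero (H.1 y' (f • x)) (H.1 y' (f • x)) main_ineq
    have hyes : y' = f • x := (H.2.1 y' (f • x)).mp hD
    refine ⟨g₁ * f, ?_⟩
    rw [mul_smul, ← hyes, hy'def]
    exact (smul_inv_smul g₁ y).symm
  refine ⟨part1, ?_⟩
  intro y z hy hz
  obtain ⟨g, hg⟩ := part1 y hy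
  obtain ⟨h, hh⟩ := part1 z hz
  refine ⟨h * g⁻¹, ?_⟩
  rw [hh, hg, mul_smul, inv_smul_smul]
end

section
/- Every finitely generated linearly ordered abelian group H admits a direct sum decomposition H = Λ₁ ⊕ ⋯ ⊕ Λₖ for some k ≥ 0, where each Λᵢ is (order-isomorphic to) a subgroup of ℝ and the order on H is the lexicographic order determined by this decomposition. -/
namespace FgLexAux
universe u
variable {H : Type*} [AddCommGroup H] [LinearOrder H] [IsOrderedAddMonoid H]

def hS (u : H) (x : H) : Set ℝ := {r | ∃ p q : ℤ, 0 < q ∧ p • u ≤ q • x ∧ r = (p : ℝ) / q}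
def hT (u : H) (x : H) : Set ℝ := {r | ∃ p q : ℤ, 0 < q ∧ q • x ≤ p • u ∧ r = (p : ℝ) / q}

variable {u : H}

theorem hS_ne (harch : ∀ x : H, ∃ n : ℤ, x ≤ n • u) (x : H) : (hS u x).Nonempty := by
  obtain ⟨n, hn⟩ := harch (-x)
  exact ⟨(-n : ℤ) / 1, -n, 1, one_pos, by simpa [neg_zsmul] using neg_le_neg hn, by simp⟩

theorem hT_ne (harch : ∀ x : H, ∃ n : ℤ, x ≤ n • u) (x : H) : (hT u x).Nonempty := by
  obtain ⟨n, hn⟩ := harch x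
  exact ⟨(n : ℤ) / 1, n, 1, one_pos, by simpa using hn, by simp⟩

theorem hST (hu : 0 < u) {x : H} {s t : ℝ} (hs : s ∈ hS u x) (ht : t ∈ hT u x) : s ≤ t := by
  obtain ⟨p1, q1, hq1, h1, rfl⟩ := hs
  obtain ⟨p2, q2, hq2, h2, rfl⟩ := ht
  have key : (q2 * p1) • u ≤ (q1 * p2) • u := by
    calc (q2 * p1) • u = q2 • (p1 • u) := mul_zsmul u q2 p1
    _ ≤ q2 • (q1 • x) := zsmul_le_zsmul_right hq2.le h1
    _ = q1 • (q2 • x) := by rw [← mul_zsmul, mul_comm, mul_zsmul]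
    _ ≤ q1 • (p2 • u) := zsmul_le_zsmul_right hq1.le h2
    _ = (q1 * p2) • u := (mul_zsmul u q1 p2).symm
  have hle : q2 * p1 ≤ q1 * p2 := le_of_not_gt fun hlt => absurd key (not_le.mpr (zsmul_lt_zsmul_left hu hlt))
  rw [div_le_div_iff₀ (by exact_mod_cast hq1) (by exact_mod_cast hq2)]
  have : ((q2 * p1 : ℤ) : ℝ) ≤ ((q1 * p2 : ℤ) : ℝ) := Int.cast_le.mpr hle
  push_cast at this ⊢
  linarith

theorem hS_bdd (harch : ∀ x : H, ∃ n : ℤ, x ≤ n • u) (hu : 0 < u) (x : H) : BddAbove (hS u x) := by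
  obtain ⟨t, ht⟩ := hT_ne harch x
  exact ⟨t, fun s hs => hST hu hs ht⟩

theorem hT_bdd (harch : ∀ x : H, ∃ n : ℤ, x ≤ n • u) (hu : 0 < u) (x : H) : BddBelow (hT u x) := by
  obtain ⟨s, hs⟩ := hS_ne harch x
  exact ⟨s, fun t ht => hST hu hs ht⟩

theorem hfloor (harch : ∀ x : H, ∃ n : ℤ, x ≤ n • u) (hu : 0 < u) (x : H) {q : ℤ} (hq : 0 < q) :
    ∃ p : ℤ, p • u ≤ q • x ∧ q • x < (p + 1) • u := by
  obtain ⟨m, hm⟩ := harch (q • x)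
  obtain ⟨n, hn⟩ := harch (-(q • x))
  have hne : ∃ z : ℤ, z • u ≤ q • x := ⟨-n, by simpa [neg_zsmul] using neg_le_neg hn⟩
  have hbdd : ∃ b : ℤ, ∀ z : ℤ, z • u ≤ q • x → z ≤ b := by
    refine ⟨m, fun z hz => ?_⟩
    by_contra hzm
    exact absurd (hz.trans hm) (not_le.mpr (zsmul_lt_zsmul_left hu (lt_of_not_ge hzm)))
  obtain ⟨p, hp, hmax⟩ := Int.exists_greatest_of_bdd hbdd hne
  refine ⟨p, hp, lt_of_not_ge fun hc => ?_⟩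
  have := hmax (p + 1) hc
  omega

noncomputable def hphi (u : H) (x : H) : ℝ := sSup (hS u x)

theorem hphi_eq_inf (harch : ∀ x : H, ∃ n : ℤ, x ≤ n • u) (hu : 0 < u) (x : H) :
    hphi u x = sInf (hT u x) := by
  apply le_antisymm
  · exact csSup_le (hS_ne harch x) fun s hs => le_csInf (hT_ne harch x) fun t ht => hST hu hs ht
  · apply le_of_forall_pos_le_add
    intro ε hε
    obtain ⟨q, hq⟩ := exists_int_gt (1 / ε)
    have hq0 : 0 < q := by
      have : (0:ℝ) < q := lt_trans (by positivity) hq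
      exact_mod_cast this
    obtain ⟨p, hp1, hp2⟩ := hfloor harch hu x hq0
    have hmemS : ((p : ℝ) / q) ∈ hS u x := ⟨p, q, hq0, hp1, rfl⟩
    have hmemT : (((p+1) : ℝ) / q) ∈ hT u x := ⟨p+1, q, hq0, hp2.le, by push_cast; ring⟩
    have h1 : sInf (hT u x) ≤ ((p:ℝ)+1) / q := csInf_le (hT_bdd harch hu x) hmemT
    have h2 : (p:ℝ)/q ≤ hphi u x := le_csSup (hS_bdd harch hu x) hmemS
    have hq0' : (0:ℝ) < q := by exact_mod_cast hq0
    have h3 : 1 / (q:ℝ) < ε := by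
      rw [div_lt_iff₀ hq0']
      rw [div_lt_iff₀ hε] at hq
      linarith
    have : ((p:ℝ)+1)/q = (p:ℝ)/q + 1/q := by ring
    linarith

theorem hphi_mono (harch : ∀ x : H, ∃ n : ℤ, x ≤ n • u) (hu : 0 < u) {x y : H} (hxy : x ≤ y) :
    hphi u x ≤ hphi u y := by
  apply csSup_le_csSup (hS_bdd harch hu y) (hS_ne harch x)
  rintro r ⟨p, q, hq, h, rfl⟩
  exact ⟨p, q, hq, h.trans (zsmul_le_zsmul_right hq.le hxy), rfl⟩

theorem hS_add {x y : H} {s t : ℝ} (hs : s ∈ hS u x) (ht : t ∈ hS u y) : s + t ∈ hS u (x + y) := by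
  obtain ⟨p1, q1, hq1, h1, rfl⟩ := hs
  obtain ⟨p2, q2, hq2, h2, rfl⟩ := ht
  refine ⟨p1 * q2 + p2 * q1, q1 * q2, mul_pos hq1 hq2, ?_, ?_⟩
  · calc (p1 * q2 + p2 * q1) • u = q2 • (p1 • u) + q1 • (p2 • u) := by
          rw [add_zsmul, mul_comm p1 q2, mul_comm p2 q1, mul_zsmul, mul_zsmul]
    _ ≤ q2 • (q1 • x) + q1 • (q2 • y) :=
        add_le_add (zsmul_le_zsmul_right hq2.le h1) (zsmul_le_zsmul_right hq1.le h2)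
    _ = (q1 * q2) • x + (q1 * q2) • y := by rw [← mul_zsmul, ← mul_zsmul, mul_comm q2 q1]
    _ = (q1 * q2) • (x + y) := (smul_add _ _ _).symm
  · have hq1' : ((q1:ℝ)) ≠ 0 := by exact_mod_cast hq1.ne'
    have hq2' : ((q2:ℝ)) ≠ 0 := by exact_mod_cast hq2.ne'
    push_cast
    field_simp

theorem hT_add {x y : H} {s t : ℝ} (hs : s ∈ hT u x) (ht : t ∈ hT u y) : s + t ∈ hT u (x + y) := by
  obtain ⟨p1, q1, hq1, h1, rfl⟩ := hs
  obtain ⟨p2, q2, hq2, h2, rfl⟩ := ht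
  refine ⟨p1 * q2 + p2 * q1, q1 * q2, mul_pos hq1 hq2, ?_, ?_⟩
  · calc (q1 * q2) • (x + y) = (q1*q2) • x + (q1*q2) • y := smul_add _ _ _
    _ = q2 • (q1 • x) + q1 • (q2 • y) := by rw [← mul_zsmul, ← mul_zsmul, mul_comm q2 q1]
    _ ≤ q2 • (p1 • u) + q1 • (p2 • u) :=
        add_le_add (zsmul_le_zsmul_right hq2.le h1) (zsmul_le_zsmul_right hq1.le h2)
    _ = (p1 * q2 + p2 * q1) • u := by
          rw [add_zsmul, mul_comm p1 q2, mul_comm p2 q1, mul_zsmul, mul_zsmul]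
  · have hq1' : ((q1:ℝ)) ≠ 0 := by exact_mod_cast hq1.ne'
    have hq2' : ((q2:ℝ)) ≠ 0 := by exact_mod_cast hq2.ne'
    push_cast
    field_simp

theorem hphi_add (harch : ∀ x : H, ∃ n : ℤ, x ≤ n • u) (hu : 0 < u) (x y : H) :
    hphi u (x + y) = hphi u x + hphi u y := by
  apply le_antisymm
  · rw [hphi_eq_inf harch hu, hphi_eq_inf harch hu, hphi_eq_inf harch hu]
    have key : ∀ s ∈ hT u x, ∀ t ∈ hT u y, sInf (hT u (x+y)) ≤ s + t := fun s hs t ht =>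
      csInf_le (hT_bdd harch hu _) (hT_add hs ht)
    have h1 : ∀ s ∈ hT u x, sInf (hT u (x+y)) - s ≤ sInf (hT u y) := fun s hs =>
      le_csInf (hT_ne harch y) fun t ht => by linarith [key s hs t ht]
    have h2 : sInf (hT u (x+y)) - sInf (hT u y) ≤ sInf (hT u x) :=
      le_csInf (hT_ne harch x) fun s hs => by linarith [h1 s hs]
    linarith
  · have key : ∀ s ∈ hS u x, ∀ t ∈ hS u y, s + t ≤ hphi u (x+y) := fun s hs t ht =>
      le_csSup (hS_bdd harch hu _) (hS_add hs ht)
    have h1 : ∀ s ∈ hS u x, hphi u y ≤ hphi u (x+y) - s := fun s hs =>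
      csSup_le (hS_ne harch y) fun t ht => by linarith [key s hs t ht]
    have h2 : hphi u x ≤ hphi u (x+y) - hphi u y :=
      csSup_le (hS_ne harch x) fun s hs => by linarith [h1 s hs]
    linarith

theorem hphi_u (harch : ∀ x : H, ∃ n : ℤ, x ≤ n • u) (hu : 0 < u) : 1 ≤ hphi u u := by
  have : (1:ℝ) = ((1:ℤ):ℝ)/((1:ℤ):ℝ) := by norm_num
  rw [this]
  exact le_csSup (hS_bdd harch hu u) ⟨1, 1, one_pos, le_refl _, rfl⟩

theorem step {H : Type*} [AddCommGroup H] [LinearOrder H] [IsOrderedAddMonoid H] (φ : H →+ ℝ)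
    (hmono : Monotone φ)
    (k : ℕ) (Λs : Fin k → AddSubgroup ℝ) (eC : ↥φ.ker ≃+ ∀ i : Fin k, Λs i)
    (hC : ∀ a b : ↥φ.ker, a < b ↔ Pi.Lex (· < ·) (fun {_} x y => x < y) (eC a) (eC b))
    (sec : ↥φ.range →ₗ[ℤ] H) (hsec : ∀ t, φ.rangeRestrict (sec t) = t) :
    ∃ (Λs' : Fin (k+1) → AddSubgroup ℝ) (e : H ≃+ (∀ i : Fin (k+1), Λs' i)),
      ∀ a b : H, a < b ↔ Pi.Lex (· < ·) (fun {_} x y => x < y) (e a) (e b) := by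
  set π := φ.rangeRestrict with hπ
  have hπval : ∀ x : H, (π x : ℝ) = φ x := fun x => rfl
  have hker : ∀ x : H, x ∈ φ.ker ↔ φ x = 0 := fun x => AddMonoidHom.mem_ker
  have hmemc : ∀ a : H, a - sec (π a) ∈ φ.ker := by
    intro a
    rw [hker, map_sub]
    have : (π (sec (π a)) : ℝ) = (π a : ℝ) := congrArg Subtype.val (hsec (π a))
    rw [hπval, hπval] at this
    rw [this, sub_self]
  set c : H → ↥φ.ker := fun a => ⟨a - sec (π a), hmemc a⟩ with hc
  have hcadd : ∀ a b : H, c (a + b) = c a + c b := by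
    intro a b
    apply Subtype.ext
    show (a + b) - sec (π (a+b)) = (a - sec (π a)) + (b - sec (π b))
    rw [map_add, map_add]
    abel
  refine ⟨(Fin.cons ↑φ.range Λs : Fin (k+1) → AddSubgroup ℝ), ?_, ?_⟩
  · exact {
      toFun := fun a => Fin.cons (π a) (eC (c a))
      invFun := fun f => sec (f 0) + ((eC.symm (fun i => f i.succ) : ↥φ.ker) : H)
      left_inv := by
        intro a
        show sec (π a) + ((eC.symm (eC (c a)) : ↥φ.ker) : H) = a
        rw [eC.symm_apply_apply]
        show sec (π a) + (a - sec (π a)) = a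
        abel
      right_inv := by
        intro f
        funext i
        induction i using Fin.cases with
        | zero =>
          show π (sec (f 0) + ((eC.symm (fun i => f i.succ) : ↥φ.ker) : H)) = f 0
          rw [map_add]
          have h2 : π ((eC.symm (fun i => f i.succ) : ↥φ.ker) : H) = 0 := by
            apply Subtype.ext
            rw [hπval]
            exact (hker _).mp (eC.symm (fun i => f i.succ)).2
          erw [h2, add_zero, hsec]
        | succ i =>
          show (eC (c (sec (f 0) + ((eC.symm (fun i => f i.succ) : ↥φ.ker) : H)))) i = f i.succ
          have : c (sec (f 0) + ((eC.symm (fun i => f i.succ) : ↥φ.ker) : H)) =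
              eC.symm (fun i => f i.succ) := by
            apply Subtype.ext
            show (sec (f 0) + _) - sec (π (sec (f 0) + _)) = _
            rw [map_add]
            have h2 : π ((eC.symm (fun i => f i.succ) : ↥φ.ker) : H) = 0 := by
              apply Subtype.ext
              rw [hπval]
              exact (hker _).mp (eC.symm (fun i => f i.succ)).2
            erw [h2, add_zero, hsec]
            abel
          erw [this, eC.apply_symm_apply]
      map_add' := by
        intro a b
        funext i
        induction i using Fin.cases with
        | zero =>
          show π (a + b) = π a + π b
          rw [map_add]
        | succ i =>
          show (eC (c (a + b))) i = ((eC (c a)) i) + ((eC (c b)) i)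
          rw [hcadd, map_add]
          rfl }
  · intro a b
    constructor
    · intro hab
      rcases lt_or_eq_of_le (hmono hab.le) with hlt | heq
      · refine ⟨0, fun j hj => absurd hj (by simp), ?_⟩
        show π a < π b
        exact Subtype.mk_lt_mk.mpr hlt
      · have hcc : c a < c b := by
          rw [Subtype.mk_lt_mk]
          have hππ : π a = π b := Subtype.ext (by rw [hπval, hπval]; exact heq)
          show a - sec (π a) < b - sec (π b)
          rw [hππ]
          exact sub_lt_sub_right hab _
        obtain ⟨i, hji, hi⟩ := (hC _ _).mp hcc
        refine ⟨i.succ, ?_, hi⟩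
        intro j hj
        induction j using Fin.cases with
        | zero =>
          show π a = π b
          exact Subtype.ext (by rw [hπval, hπval]; exact heq)
        | succ j =>
          exact hji j (by simpa using hj)
    · rintro ⟨i, hji, hi⟩
      induction i using Fin.cases with
      | zero =>
        have : π a < π b := hi
        have hφ : φ a < φ b := Subtype.mk_lt_mk.mp this
        by_contra hc'
        exact absurd (hmono (not_lt.mp hc')) (not_le.mpr hφ)
      | succ i =>
        have h0 : π a = π b := hji 0 (Fin.succ_pos i)
        have htail : Pi.Lex (· < ·) (fun {_} x y => x < y) (eC (c a)) (eC (c b)) := by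
          refine ⟨i, fun j hj => hji j.succ (by simpa using hj), hi⟩
        have hcc := (hC _ _).mpr htail
        have : a - sec (π a) < b - sec (π b) := Subtype.mk_lt_mk.mp hcc
        rw [h0] at this
        have := add_lt_add_right this (sec (π b))
        simpa using this

theorem exists_arch_unit (H : Type*) [AddCommGroup H] [LinearOrder H] [IsOrderedAddMonoid H] [AddGroup.FG H]
    [Nontrivial H] : ∃ u : H, 0 < u ∧ ∀ x : H, ∃ n : ℤ, x ≤ n • u := by
  obtain ⟨S, hS⟩ : ∃ S : Finset H, AddSubgroup.closure (S : Set H) = ⊤ := ‹AddGroup.FG H›.out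
  -- find a dominator among the generators
  have hdom : ∃ g : H, ∀ s ∈ S, ∃ n : ℕ, |s| ≤ n • |g| := by
    classical
    clear hS
    induction S using Finset.induction_on with
    | empty => exact ⟨0, fun s hs => absurd hs (Finset.notMem_empty s)⟩
    | @insert a S' ha IH =>
      obtain ⟨g, hg⟩ := IH
      by_cases hc : ∃ n : ℕ, |a| ≤ n • |g|
      · refine ⟨g, fun s hs => ?_⟩
        rcases Finset.mem_insert.mp hs with rfl | hs'
        · exact hc
        · exact hg s hs'
      · push_neg at hc
        refine ⟨a, fun s hs => ?_⟩
        rcases Finset.mem_insert.mp hs with rfl | hs'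
        · exact ⟨1, by simp⟩
        · obtain ⟨n, hn⟩ := hg s hs'
          have hga : |g| ≤ |a| := by
            have := hc 1
            simpa using this.le
          exact ⟨n, hn.trans (nsmul_le_nsmul_right hga n)⟩
  obtain ⟨g, hg⟩ := hdom
  -- every element is dominated
  have hall : ∀ x : H, ∃ n : ℕ, |x| ≤ n • |g| := by
    intro x
    have hx : x ∈ AddSubgroup.closure (S : Set H) := hS ▸ AddSubgroup.mem_top x
    induction hx using AddSubgroup.closure_induction with
    | mem s hs => exact hg s hs
    | zero => exact ⟨0, by simp⟩
    | add x y _ _ hx hy =>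
      obtain ⟨n, hn⟩ := hx
      obtain ⟨m, hm⟩ := hy
      exact ⟨n + m, (abs_add_le x y).trans (by rw [add_nsmul]; exact add_le_add hn hm)⟩
    | neg x _ hx =>
      obtain ⟨n, hn⟩ := hx
      exact ⟨n, by rwa [abs_neg]⟩
  -- g is nontrivial
  have hgpos : 0 < |g| := by
    obtain ⟨x, hx⟩ := exists_ne (0 : H)
    rcases (abs_nonneg g).lt_or_eq with h | h
    · exact h
    · exfalso
      obtain ⟨n, hn⟩ := hall x
      rw [← h] at hn
      simp only [smul_zero] at hn
      exact hx (abs_eq_zero.mp (le_antisymm hn (abs_nonneg x)))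
  refine ⟨|g|, hgpos, fun x => ?_⟩
  obtain ⟨n, hn⟩ := hall x
  exact ⟨(n : ℤ), (le_abs_self x).trans (by rwa [natCast_zsmul])⟩


theorem ordNoZeroSMul (H : Type*) [AddCommGroup H] [LinearOrder H] [IsOrderedAddMonoid H] : NoZeroSMulDivisors ℤ H := by
  constructor
  intro n x h
  rcases eq_or_ne n 0 with rfl | hn
  · exact Or.inl rfl
  · exact Or.inr (zsmul_right_injective hn (by simpa using h))

theorem subNoZeroSMul {H : Type*} [AddCommGroup H] (hH : NoZeroSMulDivisors ℤ H)
    (K : AddSubgroup H) : NoZeroSMulDivisors ℤ ↥K := by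
  constructor
  intro n x h
  have : n • (x : H) = 0 := by exact_mod_cast congrArg Subtype.val h
  rcases hH.eq_zero_or_eq_zero_of_smul_eq_zero this with h' | h'
  · exact Or.inl h'
  · exact Or.inr (Subtype.ext h')

theorem trivial_case (H : Type*) [AddCommGroup H] [LinearOrder H] [IsOrderedAddMonoid H] (h : Subsingleton H) :
    ∃ (k : ℕ) (Λs : Fin k → AddSubgroup ℝ) (e : H ≃+ (∀ i : Fin k, Λs i)),
      ∀ a b : H, a < b ↔ Pi.Lex (· < ·) (fun {_} x y => x < y) (e a) (e b) := by
  have e : H ≃+ (∀ i : Fin 0, ((Fin.elim0 : Fin 0 → AddSubgroup ℝ) i)) :=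
    { toFun := fun _ i => i.elim0
      invFun := fun _ => 0
      left_inv := fun a => Subsingleton.elim _ _
      right_inv := fun f => funext fun i => i.elim0
      map_add' := fun _ _ => funext fun i => i.elim0 }
  refine ⟨0, Fin.elim0, e, ?_⟩
  intro a b
  constructor
  · intro hab
    exact absurd (Subsingleton.elim a b) hab.ne
  · rintro ⟨i, -, -⟩
    exact i.elim0

theorem main_aux (n : ℕ) : ∀ (H : Type u) [AddCommGroup H] [LinearOrder H] [IsOrderedAddMonoid H] [AddGroup.FG H],
    Module.finrank ℤ H ≤ n →
    ∃ (k : ℕ) (Λs : Fin k → AddSubgroup ℝ) (e : H ≃+ (∀ i : Fin k, Λs i)),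
      ∀ a b : H, a < b ↔ Pi.Lex (· < ·) (fun {_} x y => x < y) (e a) (e b) := by
  induction n with
  | zero =>
    intro H _ _ _ _ hrank
    rcases subsingleton_or_nontrivial H with hsub | hnt
    · exact trivial_case H hsub
    · exfalso
      haveI : NoZeroSMulDivisors ℤ H := ordNoZeroSMul H
      haveI : Module.Finite ℤ H := Module.Finite.iff_addGroup_fg.mpr ‹_›
      have := Module.finrank_pos_iff (R := ℤ) (M := H) |>.mpr hnt
      omega
  | succ n IH =>
    intro H _ _ _ _ hrank
    rcases subsingleton_or_nontrivial H with hsub | hnt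
    · exact trivial_case H hsub
    haveI hnz : NoZeroSMulDivisors ℤ H := ordNoZeroSMul H
    haveI hfin : Module.Finite ℤ H := Module.Finite.iff_addGroup_fg.mpr ‹_›
    haveI : Module.Free ℤ H := Module.free_of_finite_type_torsion_free'
    haveI : IsNoetherian ℤ H := by infer_instance
    obtain ⟨u, hu, harch⟩ := exists_arch_unit H
    let φ : H →+ ℝ := AddMonoidHom.mk' (hphi u) (fun x y => hphi_add harch hu x y)
    have hmono : Monotone ⇑φ := fun x y h => hphi_mono harch hu h
    -- kernel instances
    haveI : NoZeroSMulDivisors ℤ ↥φ.ker := subNoZeroSMul hnz φ.ker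
    haveI hKfin : Module.Finite ℤ ↥φ.ker := by
      have hfg : (AddSubgroup.toIntSubmodule φ.ker).FG := IsNoetherian.noetherian _
      exact Module.Finite.iff_fg.mpr hfg
    haveI hKfg : AddGroup.FG ↥φ.ker := Module.Finite.iff_addGroup_fg.mp hKfin
    haveI : Module.Free ℤ ↥φ.ker := Module.free_of_finite_type_torsion_free'
    -- range instances and the section
    have hsurj : Function.Surjective φ.rangeRestrict.toIntLinearMap :=
      φ.rangeRestrict_surjective
    haveI : NoZeroSMulDivisors ℤ ↥φ.range := subNoZeroSMul (ordNoZeroSMul ℝ) φ.range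
    haveI : Module.Finite ℤ ↥φ.range :=
      Module.Finite.of_surjective φ.rangeRestrict.toIntLinearMap hsurj
    haveI : Module.Free ℤ ↥φ.range := Module.free_of_finite_type_torsion_free'
    obtain ⟨sec, hseceq⟩ :=
      Module.projective_lifting_property φ.rangeRestrict.toIntLinearMap LinearMap.id hsurj
    have hsec : ∀ t : ↥φ.range, φ.rangeRestrict (sec t) = t := fun t =>
      congrFun (congrArg DFunLike.coe hseceq) t
    -- the splitting as an additive equivalence, to compute ranks
    have hmemc : ∀ a : H, a - sec (φ.rangeRestrict a) ∈ φ.ker := by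
      intro a
      rw [AddMonoidHom.mem_ker, map_sub]
      have : (φ.rangeRestrict (sec (φ.rangeRestrict a)) : ℝ) = (φ.rangeRestrict a : ℝ) :=
        congrArg Subtype.val (hsec (φ.rangeRestrict a))
      have h2 : φ (sec (φ.rangeRestrict a)) = φ a := this
      rw [h2, sub_self]
    have hπ0 : ∀ x : ↥φ.ker, φ.rangeRestrict (x : H) = 0 := by
      intro x
      apply Subtype.ext
      exact x.2
    let E : H ≃+ ↥φ.range × ↥φ.ker := {
      toFun := fun a => (φ.rangeRestrict a, ⟨a - sec (φ.rangeRestrict a), hmemc a⟩)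
      invFun := fun p => sec p.1 + (p.2 : H)
      left_inv := by
        intro a
        show sec (φ.rangeRestrict a) + (a - sec (φ.rangeRestrict a)) = a
        abel
      right_inv := by
        rintro ⟨t, x⟩
        have h1 : φ.rangeRestrict (sec t + (x : H)) = t := by
          rw [map_add, hπ0 x, add_zero, hsec]
        refine Prod.ext h1 (Subtype.ext ?_)
        show sec t + (x : H) - sec (φ.rangeRestrict (sec t + (x : H))) = (x : H)
        rw [h1]
        abel
      map_add' := by
        intro a b
        refine Prod.ext (map_add _ a b) (Subtype.ext ?_)
        show (a + b) - sec (φ.rangeRestrict (a + b)) =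
          (a - sec (φ.rangeRestrict a)) + (b - sec (φ.rangeRestrict b))
        rw [map_add, map_add]
        abel }
    -- rank bookkeeping
    haveI : Nontrivial ↥φ.range := by
      refine nontrivial_of_ne (φ.rangeRestrict u) 0 fun hcon => ?_
      have : φ u = 0 := congrArg Subtype.val hcon
      have h1 : (1 : ℝ) ≤ φ u := hphi_u harch hu
      rw [this] at h1
      norm_num at h1
    have hrk : Module.finrank ℤ H =
        Module.finrank ℤ ↥φ.range + Module.finrank ℤ ↥φ.ker := by
      rw [E.toIntLinearEquiv.finrank_eq, Module.finrank_prod]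
    have hpos : 0 < Module.finrank ℤ ↥φ.range := Module.finrank_pos_iff.mpr ‹_›
    have hKrank : Module.finrank ℤ ↥φ.ker ≤ n := by omega
    obtain ⟨k, Λs, eC, hC⟩ := IH ↥φ.ker hKrank
    obtain ⟨Λs', e, he⟩ := step φ hmono k Λs eC hC sec hsec
    exact ⟨k + 1, Λs', e, he⟩

end FgLexAux

/-- Every finitely generated linearly ordered abelian group `H` decomposes as
`H = Λ₁ ⊕ ⋯ ⊕ Λₖ` where each `Λᵢ` is a subgroup of `ℝ` and the order on `H` is
the lexicographic order of this decomposition. -/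
theorem fg_ordered_abelian_group_lex_decomposition
    (H : Type*) [AddCommGroup H] [LinearOrder H] [IsOrderedAddMonoid H] [AddGroup.FG H] :
    ∃ (k : ℕ) (Λs : Fin k → AddSubgroup ℝ) (e : H ≃+ (∀ i : Fin k, Λs i)),
      ∀ a b : H, a < b ↔ Pi.Lex (· < ·) (fun {_} x y => x < y) (e a) (e b) := by
  exact FgLexAux.main_aux (Module.finrank ℤ H) H le_rfl
end

section
/- In a free group F with basis X, if a reduced word w is both u-periodic and v-periodic for cyclically reduced words u, v (meaning w is a common prefix of u^∞ and v^∞) and |w| ≥ |u| + |v|, then u and v commute: [u, v] = 1. -/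
/-- An element of a free group is cyclically reduced if the first letter of its
reduced word is not the inverse of its last letter. -/
def FreeGroupCyclicallyReduced {X : Type*} [DecidableEq X] (u : FreeGroup X) : Prop :=
  ∀ p : X × Bool, u.toWord.head? = some p → u.toWord.getLast? ≠ some (p.1, !p.2)

namespace FreeGroupFW

open List

variable {X : Type*} [DecidableEq X]

/-- The non-cancellation relation between adjacent letters. -/
abbrev R : X × Bool → X × Bool → Prop := fun a b => ¬(a.1 = b.1 ∧ a.2 = !b.2)

lemma reduce_eq_self_of_chain' : ∀ {L : List (X × Bool)},
    List.Chain' R L → FreeGroup.reduce L = L := by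
  intro L h
  induction L with
  | nil => rfl
  | cons x L ih =>
    rw [FreeGroup.reduce.cons, ih h.tail]
    cases L with
    | nil => rfl
    | cons hd tl =>
      have : R x hd := (List.isChain_cons_cons.mp h).1
      simp only [if_neg this]

lemma chain'_of_reduce_eq_self : ∀ {L : List (X × Bool)},
    FreeGroup.reduce L = L → List.Chain' R L := by
  intro L h
  induction L with
  | nil => exact List.isChain_nil
  | cons x L ih =>
    rw [FreeGroup.reduce.cons] at h
    have hlen : (FreeGroup.reduce L).length ≤ L.length :=
      (FreeGroup.reduce.red (L := L)).length_le
    cases hL : FreeGroup.reduce L with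
    | nil =>
      rw [hL] at h
      have h' : [x] = x :: L := h
      obtain ⟨-, hL'⟩ := List.cons_eq_cons.mp h'
      rw [← hL']
      exact List.isChain_singleton x
    | cons hd tl =>
      rw [hL] at h hlen
      have h' : (if x.1 = hd.1 ∧ x.2 = !hd.2 then tl else x :: hd :: tl) = x :: L := h
      by_cases hc : x.1 = hd.1 ∧ x.2 = !hd.2
      · rw [if_pos hc] at h'
        have := congrArg List.length h'
        simp at this
        simp at hlen
        omega
      · rw [if_neg hc] at h'
        have hL' : L = hd :: tl := (List.cons_eq_cons.mp h').2.symm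
        have : FreeGroup.reduce L = L := by rw [hL, hL']
        have hch := ih this
        rw [hL']
        exact List.isChain_cons_cons.mpr ⟨hc, hL' ▸ hch⟩

lemma chain'_toWord (u : FreeGroup X) : List.Chain' R u.toWord :=
  chain'_of_reduce_eq_self (FreeGroup.reduce_toWord u)

lemma cyc_junction {u : FreeGroup X} (hu : FreeGroupCyclicallyReduced u) :
    ∀ a ∈ u.toWord.getLast?, ∀ b ∈ u.toWord.head?, R a b := by
  intro a ha b hb hab
  have : a = (b.1, !b.2) := Prod.ext hab.1 hab.2
  exact hu b hb (this ▸ ha)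

lemma chain'_flatten_replicate {A : List (X × Bool)}
    (hA : List.Chain' R A) (hj : ∀ a ∈ A.getLast?, ∀ b ∈ A.head?, R a b) :
    ∀ N : ℕ, List.Chain' R (List.flatten (List.replicate N A)) ∧
      (N ≠ 0 → (List.flatten (List.replicate N A)).head? = A.head?) := by
  intro N
  induction N with
  | zero => exact ⟨List.isChain_nil, fun h => absurd rfl h⟩
  | succ N ih =>
    rw [List.replicate_succ, List.flatten_cons]
    constructor
    · refine List.isChain_append.mpr ⟨hA, ih.1, ?_⟩
      intro a ha b hb
      cases N with
      | zero => simp at hb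
      | succ N =>
        have := ih.2 (Nat.succ_ne_zero N)
        rw [this] at hb
        exact hj a ha b hb
    · intro _
      cases A with
      | nil => simp
      | cons c cs => simp

lemma toWord_pow {u : FreeGroup X} (hu : FreeGroupCyclicallyReduced u) (N : ℕ) :
    (u ^ N).toWord = List.flatten (List.replicate N u.toWord) := by
  conv_lhs => rw [← FreeGroup.mk_toWord (x := u)]
  rw [FreeGroup.pow_mk, FreeGroup.toWord_mk]
  exact reduce_eq_self_of_chain'
    ((chain'_flatten_replicate (chain'_toWord u) (cyc_junction hu) N).1)

lemma length_flatten_replicate {α : Type*} (N : ℕ) (A : List α) :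
    (List.flatten (List.replicate N A)).length = N * A.length := by
  induction N with
  | zero => simp
  | succ N ih => rw [List.replicate_succ, List.flatten_cons, List.length_append, ih]; ring

lemma getElem_flatten_replicate {α : Type*} {A : List α} (hn : 0 < A.length) :
    ∀ (N : ℕ) (i : ℕ) (h : i < (List.flatten (List.replicate N A)).length),
      (List.flatten (List.replicate N A))[i] = A[i % A.length]'(Nat.mod_lt i hn) := by
  intro N
  induction N with
  | zero => intro i h; simp [length_flatten_replicate] at h
  | succ N ih =>
    intro i h
    have e : List.flatten (List.replicate (N + 1) A) = A ++ List.flatten (List.replicate N A) := by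
      rw [List.replicate_succ, List.flatten_cons]
    rw [List.getElem_of_eq e]
    by_cases hi : i < A.length
    · rw [List.getElem_append_left hi]
      congr 1
      exact (Nat.mod_eq_of_lt hi).symm
    · push_neg at hi
      rw [List.getElem_append_right hi, ih]
      congr 1
      have := Nat.add_mod_right (i - A.length) A.length
      rw [Nat.sub_add_cancel hi] at this
      omega

lemma fineWilf {β : Type*} (n m : ℕ) (hn : 0 < n) (hm : 0 < m) (s t : ℕ → β)
    (hs : ∀ i, s (i + n) = s i) (ht : ∀ i, t (i + m) = t i)
    (h : ∀ i < n + m, s i = t i) : ∀ i, s i = t i := by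
  intro i
  induction i using Nat.strong_induction_on with
  | _ i ih =>
    rcases lt_or_ge i (n + m) with h' | h'
    · exact h i h'
    · calc s i = s (i - n) := by conv_lhs => rw [show i = (i - n) + n by omega, hs]
        _ = t (i - n) := ih _ (by omega)
        _ = t (i - n - m) := by conv_lhs => rw [show i - n = (i - n - m) + m by omega, ht]
        _ = s (i - n - m) := (ih _ (by omega)).symm
        _ = s (i - m) := by rw [show i - m = (i - n - m) + n by omega, hs]
        _ = t (i - m) := ih _ (by omega)
        _ = t i := by conv_rhs => rw [show i = (i - m) + m by omega, ht]

end FreeGroupFW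

/-- Double periodicity (finitary Fine–Wilf / Lyndon–Schützenberger version):
if a reduced word `w` is a common prefix of powers of the cyclically reduced
words `u` and `v`, and `|w| ≥ |u| + |v|`, then `[u, v] = 1`. -/
theorem freeGroup_double_periodicity {X : Type*} [DecidableEq X]
    (u v w : FreeGroup X)
    (hu : FreeGroupCyclicallyReduced u) (hv : FreeGroupCyclicallyReduced v)
    (hwu : ∃ N : ℕ, w.toWord <+: (u ^ N).toWord)
    (hwv : ∃ M : ℕ, w.toWord <+: (v ^ M).toWord)
    (hlen : u.toWord.length + v.toWord.length ≤ w.toWord.length) :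
    u * v = v * u := by
  classical
  set A := u.toWord with hA
  set B := v.toWord with hB
  by_cases hA0 : A = []
  · have : u = 1 := FreeGroup.toWord_eq_nil_iff.mp hA0
    rw [this, one_mul, mul_one]
  by_cases hB0 : B = []
  · have : v = 1 := FreeGroup.toWord_eq_nil_iff.mp hB0
    rw [this, one_mul, mul_one]
  have hn : 0 < A.length := List.length_pos_iff.mpr hA0
  have hm : 0 < B.length := List.length_pos_iff.mpr hB0
  obtain ⟨N, hNp⟩ := hwu
  obtain ⟨M, hMp⟩ := hwv
  rw [FreeGroupFW.toWord_pow hu] at hNp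
  rw [FreeGroupFW.toWord_pow hv] at hMp
  set s : ℕ → X × Bool := fun i => A[i % A.length]'(Nat.mod_lt i hn) with hs_def
  set t : ℕ → X × Bool := fun i => B[i % B.length]'(Nat.mod_lt i hm) with ht_def
  have hs : ∀ i, s (i + A.length) = s i := by
    intro i
    simp only [hs_def]
    congr 1
    exact Nat.add_mod_right i A.length
  have ht : ∀ i, t (i + B.length) = t i := by
    intro i
    simp only [ht_def]
    congr 1
    exact Nat.add_mod_right i B.length
  have hagree : ∀ i < A.length + B.length, s i = t i := by
    intro i hi
    have hiw : i < w.toWord.length := lt_of_lt_of_le hi hlen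
    have h1 : w.toWord[i] = s i := by
      rw [hNp.getElem hiw]
      exact FreeGroupFW.getElem_flatten_replicate hn N i _
    have h2 : w.toWord[i] = t i := by
      rw [hMp.getElem hiw]
      exact FreeGroupFW.getElem_flatten_replicate hm M i _
    rw [← h1, ← h2]
  have key : ∀ i, s i = t i :=
    FreeGroupFW.fineWilf A.length B.length hn hm s t hs ht hagree
  have hcomm : A ++ B = B ++ A := by
    apply List.ext_getElem
    · simp [Nat.add_comm]
    · intro i h1 h2
      have hi : i < A.length + B.length := by simpa using h1
      have e1 : (A ++ B)[i]'h1 = s i := by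
        by_cases hii : i < A.length
        · rw [List.getElem_append_left hii]
          simp only [hs_def]
          congr 1
          exact (Nat.mod_eq_of_lt hii).symm
        · push_neg at hii
          rw [List.getElem_append_right hii]
          have p1 : s i = s (i - A.length) := by
            conv_lhs => rw [show i = (i - A.length) + A.length by omega, hs]
          rw [p1, key (i - A.length)]
          simp only [ht_def]
          congr 1
          exact (Nat.mod_eq_of_lt (by omega)).symm
      have e2 : (B ++ A)[i]'h2 = s i := by
        by_cases hii : i < B.length
        · rw [List.getElem_append_left hii, key i]
          simp only [ht_def]
          congr 1
          exact (Nat.mod_eq_of_lt hii).symm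
        · push_neg at hii
          rw [List.getElem_append_right hii]
          have p1 : s i = t i := key i
          have p2 : t i = t (i - B.length) := by
            conv_lhs => rw [show i = (i - B.length) + B.length by omega, ht]
          have p3 : t (i - B.length) = s (i - B.length) := (key _).symm
          rw [p1, p2, p3]
          simp only [hs_def]
          congr 1
          exact (Nat.mod_eq_of_lt (by omega)).symm
      rw [e1, e2]
  calc u * v = FreeGroup.mk A * FreeGroup.mk B := by
        rw [hA, hB, FreeGroup.mk_toWord, FreeGroup.mk_toWord]
    _ = FreeGroup.mk (A ++ B) := FreeGroup.mul_mk
    _ = FreeGroup.mk (B ++ A) := by rw [hcomm]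
    _ = v * u := by rw [← FreeGroup.mul_mk, hA, hB, FreeGroup.mk_toWord, FreeGroup.mk_toWord]
end
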